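/- Fix a natural number k. There exists a natural number N such that for every finite simple graph G that is bipartite (i.e., 2-colorable) and has maximum degree at most k, there exists a finite simple bipartite graph H whose degree multiset equals the degree multiset of G and each of whose connected components has at most N vertices. -/

import Mathlib

/-!
Split the vertices by colour: this writes the degree multiset as `P + Q` with `P.sum = Q.sum`
and all entries at most `K = k + 1`. If this common sum is small, `G` itself has small
components. Otherwise, after setting the zeros aside as isolated vertices, a pigeonhole argument
on prefix sums repeatedly peels off sub-multisets `P₁ ≤ P`, `Q₁ ≤ Q` with `P₁.sum = Q₁.sum`
between `K (K + 1)` and `K (K + 1) + K²`, cutting `(P, Q)` into balanced pieces of bounded sum.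

Each piece is realized by a bipartite graph on its own vertices: line up the `m` half-edges of
the left vertices consecutively, and hand them to the right vertices in the order obtained by
transposing a grid with `K` rows. Two half-edges of one left vertex are less than `K` apart, so
after transposing they are at least `K` apart (this needs `m ≥ K (K + 1)`), and hence go to
distinct right vertices, whose half-edges also form consecutive blocks of length at most `K`. In the disjoint union of the pieces every component lies in one piece,
so it has at most twice the largest piece sum many vertices.
-/

open scoped Classical

/-- The degree multiset of a finite simple graph: the multiset of vertex
degrees counted with multiplicity. -/
noncomputable def degMultiset {V : Type} [Fintype V] (G : SimpleGraph V) : Multiset ℕ :=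
  Finset.univ.val.map fun v => G.degree v

open Finset

namespace SimpleGraph

variable {V : Type*} {G : SimpleGraph V}

theorem Reachable.eq_of_adj_imp_eq {ι : Type*} {p : V → ι}
    (hp : ∀ ⦃u v⦄, G.Adj u v → p u = p v) {u v : V} (h : G.Reachable u v) : p u = p v := by
  rw [reachable_iff_reflTransGen] at h
  induction h with
  | refl => rfl
  | tail _ hadj ih => exact ih.trans (hp hadj)

theorem ConnectedComponent.ncard_supp_le_of_adj_imp_eq [Finite V] {ι : Type*} {p : V → ι}
    (hp : ∀ ⦃u v⦄, G.Adj u v → p u = p v) {N : ℕ} (hN : ∀ i, {v | p v = i}.ncard ≤ N)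
    (c : G.ConnectedComponent) : c.supp.ncard ≤ N := by
  induction c using ConnectedComponent.ind with | h v =>
  refine le_trans (Set.ncard_le_ncard fun w hw => ?_) (hN (p v))
  exact Reachable.eq_of_adj_imp_eq hp (ConnectedComponent.eq.mp hw)

theorem ncard_supp_le_max_sum_degree [Fintype V] [DecidableRel G.Adj]
    (c : G.ConnectedComponent) : c.supp.ncard ≤ max 1 (∑ v, G.degree v) := by
  refine c.ncard_supp_le_of_adj_imp_eq (p := fun v => if G.degree v = 0 then some v else none)
    (fun u v huv => ?_) fun i => ?_
  · simp [(G.degree_pos_iff_exists_adj u).mpr ⟨v, huv⟩ |>.ne',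
      (G.degree_pos_iff_exists_adj v).mpr ⟨u, huv.symm⟩ |>.ne']
  cases i with
  | some w =>
    refine le_max_of_le_left ((Set.ncard_le_ncard (t := {w}) fun v hv => ?_).trans_eq
      (Set.ncard_singleton w))
    simp only [Set.mem_ofPred_eq, Option.ite_none_right_eq_some, Option.some.injEq] at hv
    exact hv.2
  | none =>
    refine le_max_of_le_right ?_
    calc {v | (if G.degree v = 0 then some v else none) = none}.ncard
        = #{v | G.degree v ≠ 0} := by
          rw [← Set.ncard_coe_finset]; congr 1; ext v; simp
      _ ≤ ∑ v ∈ {v | G.degree v ≠ 0}, G.degree v :=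
          by simpa using card_nsmul_le_sum _ _ 1 fun v hv =>
            Nat.one_le_iff_ne_zero.mpr (mem_filter.mp hv).2
      _ ≤ ∑ v, G.degree v := sum_le_univ_sum_of_nonneg fun _ => Nat.zero_le _

end SimpleGraph

section DegMultiset

variable {α β V W : Type} [Fintype α] [Fintype β] [Fintype V] [Fintype W]

theorem degMultiset_eq_map_inl_add_map_inr (H : SimpleGraph (α ⊕ β)) :
    degMultiset H = univ.val.map (fun a => H.degree (.inl a))
      + univ.val.map (fun b => H.degree (.inr b)) := by
  rw [degMultiset, ← univ_disjSum_univ]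
  exact (Multiset.map_add _ _ _).trans (by simp only [Multiset.map_map]; rfl)

theorem SimpleGraph.Iso.degMultiset_eq {G : SimpleGraph V} {G' : SimpleGraph W} (φ : G ≃g G') :
    degMultiset G' = degMultiset G := by
  rw [degMultiset, degMultiset, ← map_univ_equiv φ.toEquiv, map_val, Multiset.map_map]
  exact Multiset.map_congr rfl fun v _ => φ.degree_eq v

theorem degMultiset_sum (G : SimpleGraph V) (H : SimpleGraph W) :
    degMultiset (G ⊕g H) = degMultiset G + degMultiset H := by
  rw [degMultiset_eq_map_inl_add_map_inr]
  congr 1 <;> refine Multiset.map_congr rfl fun v _ => ?_ <;>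
    simp [← SimpleGraph.card_neighborSet_eq_degree, SimpleGraph.neighborSet_sum_inl,
      SimpleGraph.neighborSet_sum_inr, card_image_of_injective _ Sum.inl_injective,
      card_image_of_injective _ Sum.inr_injective]

end DegMultiset

def BipartiteRealizable (N : ℕ) (D : Multiset ℕ) : Prop :=
  ∃ (V : Type) (_ : Fintype V) (H : SimpleGraph V),
    H.Colorable 2 ∧ degMultiset H = D ∧ ∀ c : H.ConnectedComponent, c.supp.ncard ≤ N

namespace BipartiteRealizable

variable {N M : ℕ} {D E : Multiset ℕ}

theorem mono (h : BipartiteRealizable N D) (hNM : N ≤ M) : BipartiteRealizable M D := by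
  obtain ⟨V, _, H, hcol, hdeg, hcomp⟩ := h
  exact ⟨V, _, H, hcol, hdeg, fun c => (hcomp c).trans hNM⟩

theorem add (hD : BipartiteRealizable N D) (hE : BipartiteRealizable N E) :
    BipartiteRealizable N (D + E) := by
  obtain ⟨V, _, G, hGcol, rfl, hGcomp⟩ := hD
  obtain ⟨W, _, H, hHcol, rfl, hHcomp⟩ := hE
  refine ⟨V ⊕ W, inferInstance, G ⊕g H, SimpleGraph.colorable_sum.mpr ⟨hGcol, hHcol⟩,
    degMultiset_sum G H, fun c => ?_⟩
  refine c.ncard_supp_le_of_adj_imp_eq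
    (p := Sum.map G.connectedComponentMk H.connectedComponentMk) ?_ ?_
  · rintro (u | u) (v | v) huv
    · exact congrArg Sum.inl (SimpleGraph.ConnectedComponent.connectedComponentMk_eq_of_adj huv)
    · exact absurd huv (SimpleGraph.not_adj_sum_inl_inr _ _)
    · exact absurd huv.symm (SimpleGraph.not_adj_sum_inl_inr _ _)
    · exact congrArg Sum.inr (SimpleGraph.ConnectedComponent.connectedComponentMk_eq_of_adj huv)
  · rintro (i | i)
    · have : {v | Sum.map G.connectedComponentMk H.connectedComponentMk v = .inl i}
          = Sum.inl '' i.supp := by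
        ext (v | v) <;> simp
      rw [this, Set.ncard_image_of_injective _ Sum.inl_injective]
      exact hGcomp i
    · have : {v | Sum.map G.connectedComponentMk H.connectedComponentMk v = .inr i}
          = Sum.inr '' i.supp := by
        ext (v | v) <;> simp
      rw [this, Set.ncard_image_of_injective _ Sum.inr_injective]
      exact hHcomp i

theorem exists_fin (h : BipartiteRealizable N D) :
    ∃ (n : ℕ) (H : SimpleGraph (Fin n)), H.Colorable 2 ∧ degMultiset H = D ∧
      ∀ c : H.ConnectedComponent, c.supp.ncard ≤ N := by
  obtain ⟨V, _, G, hcol, rfl, hcomp⟩ := h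
  let φ := SimpleGraph.Iso.map (Fintype.equivFin V) G
  refine ⟨_, _, hcol.of_hom φ.symm.toHom, φ.degMultiset_eq, fun c => ?_⟩
  rw [← φ.connectedComponentEquiv.apply_symm_apply c,
    ← Set.ncard_congr' (SimpleGraph.ConnectedComponent.isoEquivSupp φ _)]
  exact hcomp _

end BipartiteRealizable

theorem SimpleGraph.Colorable.bipartiteRealizable {V : Type} [Fintype V] {G : SimpleGraph V}
    (hG : G.Colorable 2) {N : ℕ} (hN : 1 ≤ N) (hsum : ∑ v, G.degree v ≤ N) :
    BipartiteRealizable N (degMultiset G) :=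
  ⟨V, _, G, hG, rfl, fun c => (G.ncard_supp_le_max_sum_degree c).trans (max_le hN hsum)⟩

theorem SimpleGraph.Colorable.exists_degMultiset_eq_add {V : Type} [Fintype V]
    {G : SimpleGraph V} (hG : G.Colorable 2) :
    ∃ P Q : Multiset ℕ, degMultiset G = P + Q ∧ P.sum = Q.sum := by
  obtain ⟨c⟩ := hG
  have hst : G.IsBipartiteWith ↑({v | c v = 0} : Finset V) ↑({v | c v ≠ 0} : Finset V) := by
    refine ⟨disjoint_coe.mpr (disjoint_filter_filter_not _ _ _), fun v w hvw => ?_⟩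
    have : c v ≠ c w := c.valid hvw
    simp only [coe_filter, mem_univ, true_and, Set.mem_ofPred_eq]
    omega
  refine ⟨_, _, ?_, isBipartiteWith_sum_degrees_eq hst⟩
  rw [degMultiset, ← Multiset.map_add, filter_val, filter_val, Multiset.filter_add_not]

theorem bipartiteRealizable_replicate_zero {N : ℕ} (hN : 1 ≤ N) (n : ℕ) :
    BipartiteRealizable N (Multiset.replicate n 0) := by
  have h := SimpleGraph.Colorable.bipartiteRealizable (G := (⊥ : SimpleGraph (Fin n)))
    ⟨SimpleGraph.Coloring.mk (fun _ => 0) fun h => h.elim⟩ hN (by simp)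
  simpa [degMultiset, Multiset.map_const'] using h

section GridTranspose

/- Write `0, …, m - 1` column by column into a grid with `K` rows, so that `x` sits in row
`x % K` and column `x / K`; row `v` then has `m / K` or `m / K + 1` entries and starts at
`gridRowStart K m v`. Reading the grid row by row sends `x` to `gridTranspose K m x`. -/

def gridRowStart (K m v : ℕ) : ℕ := v * (m / K) + min v (m % K)

def gridTranspose (K m x : ℕ) : ℕ := gridRowStart K m (x % K) + x / K

variable {K m : ℕ}

theorem gridRowStart_mono {v w : ℕ} (h : v ≤ w) : gridRowStart K m v ≤ gridRowStart K m w := by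
  unfold gridRowStart
  have := Nat.mul_le_mul_right (m / K) h
  omega

theorem gridRowStart_add_div_le (v : ℕ) :
    gridRowStart K m v + m / K ≤ gridRowStart K m (v + 1) := by
  unfold gridRowStart
  rw [Nat.succ_mul]
  omega

theorem gridRowStart_self (hK : 0 < K) : gridRowStart K m K = m := by
  have := Nat.div_add_mod m K
  have := Nat.mod_lt m hK
  unfold gridRowStart
  omega

theorem gridTranspose_lt_gridRowStart_succ {x : ℕ} (hx : x < m) :
    gridTranspose K m x < gridRowStart K m (x % K + 1) := by
  have hdiv : x / K ≤ m / K := Nat.div_le_div_right hx.le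
  unfold gridTranspose gridRowStart
  rw [Nat.succ_mul]
  rcases hdiv.lt_or_eq with hlt | heq
  · omega
  · have := Nat.div_add_mod x K
    have := Nat.div_add_mod m K
    rw [heq] at *
    omega

theorem gridTranspose_lt {x : ℕ} (hx : x < m) : gridTranspose K m x < m := by
  rcases K.eq_zero_or_pos with rfl | hK
  · simpa [gridTranspose, gridRowStart] using hx
  calc gridTranspose K m x
      < gridRowStart K m (x % K + 1) := gridTranspose_lt_gridRowStart_succ hx
    _ ≤ gridRowStart K m K := gridRowStart_mono (Nat.mod_lt x hK)
    _ = m := gridRowStart_self hK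

theorem gridTranspose_inj_of_lt {x y : ℕ} (hx : x < m) (hy : y < m)
    (h : gridTranspose K m x = gridTranspose K m y) : x = y := by
  wlog hxy : x % K ≤ y % K generalizing x y
  · exact (this hy hx h.symm (by omega)).symm
  rcases hxy.lt_or_eq with hlt | heq
  · have h1 := gridTranspose_lt_gridRowStart_succ (K := K) hx
    have h2 : gridRowStart K m (x % K + 1) ≤ gridRowStart K m (y % K) := gridRowStart_mono hlt
    have h3 : gridRowStart K m (y % K) ≤ gridTranspose K m y := Nat.le_add_right _ _
    omega
  · have hdiv : x / K = y / K := by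
      unfold gridTranspose at h
      rw [heq] at h
      omega
    rw [← Nat.div_add_mod x K, ← Nat.div_add_mod y K, hdiv, heq]

theorem gridTranspose_add_le_or_add_le (hm : K * (K + 1) ≤ m) {x y : ℕ} (hne : x ≠ y)
    (hxy : x < y + K) (hyx : y < x + K) :
    gridTranspose K m x + K ≤ gridTranspose K m y ∨
      gridTranspose K m y + K ≤ gridTranspose K m x := by
  wlog hlt : x < y generalizing x y
  · exact (this hne.symm hyx hxy (by omega)).symm
  have hK : 0 < K := by omega
  have hcol : K + 1 ≤ m / K := (Nat.le_div_iff_mul_le hK).mpr (by linarith)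
  have hx := Nat.div_add_mod x K
  have hy := Nat.div_add_mod y K
  have hxK := Nat.mod_lt x hK
  have hyK := Nat.mod_lt y hK
  have h1 : x / K ≤ y / K := Nat.div_le_div_right hlt.le
  have h2 : y / K ≤ x / K + 1 := by
    rw [← Nat.add_div_right x hK]; exact Nat.div_le_div_right hyx.le
  unfold gridTranspose
  rcases h1.lt_or_eq with hlt | heq
  · have hcol' : y / K = x / K + 1 := by omega
    rw [hcol', Nat.mul_succ] at hy
    have := gridRowStart_add_div_le (K := K) (m := m) (y % K)
    have := gridRowStart_mono (K := K) (m := m) (show y % K + 1 ≤ x % K by omega)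
    omega
  · rw [heq] at hx
    have := gridRowStart_add_div_le (K := K) (m := m) (x % K)
    have := gridRowStart_mono (K := K) (m := m) (show x % K + 1 ≤ y % K by omega)
    omega

noncomputable def gridTransposeEquiv (K m : ℕ) : Fin m ≃ Fin m :=
  Equiv.ofBijective (fun x => ⟨gridTranspose K m x, gridTranspose_lt x.2⟩)
    (Finite.injective_iff_bijective.mp fun x y h =>
      Fin.ext (gridTranspose_inj_of_lt x.2 y.2 (congrArg Fin.val h)))

@[simp] theorem gridTransposeEquiv_apply (x : Fin m) :
    (gridTransposeEquiv K m x : ℕ) = gridTranspose K m x := rfl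

end GridTranspose

theorem lt_add_of_finSigmaFinEquiv_symm_fst_eq {p K : ℕ} {n : Fin p → ℕ} (hn : ∀ i, n i ≤ K)
    {x y : Fin (∑ i, n i)} (h : (finSigmaFinEquiv.symm x).1 = (finSigmaFinEquiv.symm y).1) :
    (x : ℕ) < y + K := by
  obtain ⟨⟨i, j⟩, rfl⟩ := finSigmaFinEquiv.surjective x
  obtain ⟨⟨i', j'⟩, rfl⟩ := finSigmaFinEquiv.surjective y
  simp only [Equiv.symm_apply_apply] at h
  subst h
  rw [finSigmaFinEquiv_apply, finSigmaFinEquiv_apply]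
  dsimp only
  have := hn i
  omega

theorem card_filter_symm_fst_eq {X : Type*} [Fintype X] {p : ℕ} {n : Fin p → ℕ}
    (E : (Σ i, Fin (n i)) ≃ X) (i : Fin p) : #{x | (E.symm x).1 = i} = n i := by
  rw [← Fintype.card_subtype, ← Fintype.card_fin (n i)]
  exact Fintype.card_congr ((E.symm.subtypeEquiv fun _ => Iff.rfl).trans (Equiv.sigmaSubtype i))

section StubGraph

variable {S α β : Type*} (f : S → α) (g : S → β)

def stubGraph : SimpleGraph (α ⊕ β) :=
  SimpleGraph.fromRel fun x y => ∃ s, x = .inl (f s) ∧ y = .inr (g s)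

variable {f g}

theorem stubGraph_le_completeBipartiteGraph : stubGraph f g ≤ completeBipartiteGraph α β := by
  rintro (a | b) (a' | b') <;> simp [stubGraph]

theorem stubGraph_colorable : (stubGraph f g).Colorable 2 :=
  ((SimpleGraph.CompleteBipartiteGraph.bicoloring α β).colorable.mono_left
    stubGraph_le_completeBipartiteGraph).mono (by simp)

variable [Fintype S] [Fintype α] [Fintype β] (hfg : Function.Injective fun s => (f s, g s))
include hfg

theorem stubGraph_degree_inl (a : α) : (stubGraph f g).degree (.inl a) = #{s | f s = a} := by
  rw [← SimpleGraph.card_neighborFinset_eq_degree,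
    ← card_image_of_injOn (f := (Sum.inr ∘ g : S → α ⊕ β))]
  · congr 1
    ext (a' | b) <;> rw [SimpleGraph.mem_neighborFinset] <;> simp [stubGraph, eq_comm]
  · intro s hs t ht hst
    simp only [coe_filter, mem_univ, true_and, Set.mem_ofPred_eq] at hs ht
    exact hfg (Prod.ext (hs.trans ht.symm) (Sum.inr_injective hst))

theorem stubGraph_degree_inr (b : β) : (stubGraph f g).degree (.inr b) = #{s | g s = b} := by
  rw [← SimpleGraph.card_neighborFinset_eq_degree,
    ← card_image_of_injOn (f := (Sum.inl ∘ f : S → α ⊕ β))]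
  · congr 1
    ext (a | b') <;> rw [SimpleGraph.mem_neighborFinset] <;> simp [stubGraph, eq_comm, and_comm]
  · intro s hs t ht hst
    simp only [coe_filter, mem_univ, true_and, Set.mem_ofPred_eq] at hs ht
    exact hfg (Prod.ext (Sum.inl_injective hst) (hs.trans ht.symm))

end StubGraph

theorem exists_bipartite_realization {K p q : ℕ} {d : Fin p → ℕ} {e : Fin q → ℕ}
    (hd : ∀ i, d i ≤ K) (he : ∀ j, e j ≤ K) (hsum : ∑ i, d i = ∑ j, e j)
    (hm : K * (K + 1) ≤ ∑ i, d i) :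
    ∃ H : SimpleGraph (Fin p ⊕ Fin q), H.Colorable 2 ∧
      (∀ i, H.degree (.inl i) = d i) ∧ ∀ j, H.degree (.inr j) = e j := by
  let σ := gridTransposeEquiv K (∑ i, d i)
  let E : (Σ j, Fin (e j)) ≃ Fin (∑ i, d i) :=
    (finSigmaFinEquiv.trans (finCongr hsum.symm)).trans σ.symm
  let f : Fin (∑ i, d i) → Fin p := fun x => (finSigmaFinEquiv.symm x).1
  let g : Fin (∑ i, d i) → Fin q := fun x => (E.symm x).1
  have hfg : Function.Injective fun x => (f x, g x) := by
    intro x y hxy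
    simp only [Prod.mk.injEq] at hxy
    by_contra hne
    have hσ : ∀ {x y}, g x = g y → (σ x : ℕ) < σ y + K := fun h =>
      lt_add_of_finSigmaFinEquiv_symm_fst_eq (x := finCongr hsum (σ _))
        (y := finCongr hsum (σ _)) he h
    have := gridTranspose_add_le_or_add_le hm (Fin.val_ne_of_ne hne)
      (lt_add_of_finSigmaFinEquiv_symm_fst_eq hd hxy.1)
      (lt_add_of_finSigmaFinEquiv_symm_fst_eq hd hxy.1.symm)
    have := hσ hxy.2
    have := hσ hxy.2.symm
    simp only [σ, gridTransposeEquiv_apply] at *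
    omega
  exact ⟨stubGraph f g, stubGraph_colorable,
    fun i => (stubGraph_degree_inl hfg i).trans (by convert card_filter_symm_fst_eq _ i),
    fun j => (stubGraph_degree_inr hfg j).trans (by convert card_filter_symm_fst_eq E j)⟩

theorem Multiset.exists_fin_univ_map_eq {α : Type*} (P : Multiset α) :
    ∃ (p : ℕ) (d : Fin p → α), univ.val.map d = P :=
  ⟨_, P.toList.get, by rw [Fin.univ_val_map, List.ofFn_get, Multiset.coe_toList]⟩

theorem bipartiteRealizable_card_add_card {K : ℕ} {P Q : Multiset ℕ} (hP : ∀ x ∈ P, x ≤ K)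
    (hQ : ∀ x ∈ Q, x ≤ K) (hsum : P.sum = Q.sum) (hm : K * (K + 1) ≤ P.sum) :
    BipartiteRealizable (Multiset.card P + Multiset.card Q) (P + Q) := by
  obtain ⟨p, d, rfl⟩ := P.exists_fin_univ_map_eq
  obtain ⟨q, e, rfl⟩ := Q.exists_fin_univ_map_eq
  obtain ⟨H, hcol, hdeg_inl, hdeg_inr⟩ := exists_bipartite_realization
    (fun i => hP _ (Multiset.mem_map_of_mem _ (mem_univ i)))
    (fun j => hQ _ (Multiset.mem_map_of_mem _ (mem_univ j))) hsum hm
  refine ⟨Fin p ⊕ Fin q, inferInstance, H, hcol, ?_, fun c => ?_⟩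
  · simp only [degMultiset_eq_map_inl_add_map_inr, hdeg_inl, hdeg_inr]
  · simpa using c.supp.ncard_le_card

namespace List

def prefixLenLE (l : List ℕ) (t : ℕ) : ℕ :=
  Nat.findGreatest (fun j => (l.take j).sum ≤ t) l.length

variable {l : List ℕ} {K t : ℕ}

theorem sum_take_prefixLenLE_le : (l.take (l.prefixLenLE t)).sum ≤ t :=
  Nat.findGreatest_spec (P := fun j => (l.take j).sum ≤ t) (Nat.zero_le _)
    (by rw [take_zero, sum_nil]; exact Nat.zero_le t)

theorem lt_sum_take_prefixLenLE_add (hl : ∀ x ∈ l, x ≤ K) (hK : 0 < K) (ht : t ≤ l.sum) :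
    t < (l.take (l.prefixLenLE t)).sum + K := by
  rcases (Nat.findGreatest_le (P := fun j => (l.take j).sum ≤ t) l.length).lt_or_eq with hlt | heq
  · have hnext := Nat.findGreatest_is_greatest (Nat.lt_succ_self _) hlt
    rw [sum_take_succ l _ hlt] at hnext
    have := hl _ (getElem_mem hlt)
    unfold prefixLenLE
    omega
  · unfold prefixLenLE
    rw [heq, take_length]
    omega

theorem prefixLenLE_mono : Monotone l.prefixLenLE := fun _ _ h =>
  Nat.findGreatest_mono (fun _ hj => hj.trans h) le_rfl

theorem sum_take_add_sum_drop_take {a b : ℕ} (h : a ≤ b) :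
    (l.take a).sum + ((l.take b).drop a).sum = (l.take b).sum := by
  rw [← sum_take_add_sum_drop (l.take b) a, take_take, min_eq_left h]

end List

open List in
theorem exists_sublists_sum_eq_le_sq {K : ℕ} {l l' : List ℕ} (hl : ∀ x ∈ l, 1 ≤ x ∧ x ≤ K)
    (hl' : ∀ x ∈ l', x ≤ K) (hlen : K < l.length) (hsum : l.sum ≤ l'.sum) :
    ∃ s s' : List ℕ, s <+ l ∧ s' <+ l' ∧ s.sum = s'.sum ∧ 0 < s.sum ∧ s.sum ≤ K * K := by
  have hK : 0 < K := (hl _ (List.getElem_mem hlen)).1.trans (hl _ (List.getElem_mem hlen)).2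
  have hA : ∀ i, (l.take i).sum ≤ l'.sum := fun i =>
    ((l.sum_take_add_sum_drop i).symm ▸ Nat.le_add_right _ _).trans hsum
  -- Greedily match the prefix sums of `l` by prefix sums of `l'`; the shortfall lies in
  -- `[0, K)`, so two of the first `K + 1` prefixes of `l` have the same shortfall.
  have hgap : ∀ i ∈ Finset.range (K + 1), (l.take i).sum -
      (l'.take (l'.prefixLenLE (l.take i).sum)).sum ∈ Finset.range K := fun i _ => by
    have := List.lt_sum_take_prefixLenLE_add hl' hK (hA i)
    have := l'.sum_take_prefixLenLE_le (t := (l.take i).sum)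
    rw [Finset.mem_range]
    omega
  obtain ⟨i, hi, i', hi', hne, hgap_eq⟩ :=
    exists_ne_map_eq_of_card_lt_of_maps_to (by simp) hgap
  wlog hii' : i < i' generalizing i i'
  · exact this i' hi' i hi hne.symm hgap_eq.symm (by omega)
  rw [Finset.mem_range] at hi hi'
  have hs := l.sum_take_add_sum_drop_take hii'.le
  have hj := l'.prefixLenLE_mono (Nat.le.intro hs)
  have hs' := l'.sum_take_add_sum_drop_take hj
  have hB := l'.sum_take_prefixLenLE_le (t := (l.take i).sum)
  have hB' := l'.sum_take_prefixLenLE_le (t := (l.take i').sum)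
  set s := (l.take i').drop i
  have hlen_s : s.length = i' - i := by simp [s]; omega
  have hs_pos : s.length • 1 ≤ s.sum := s.card_nsmul_le_sum 1 fun x hx =>
    (hl x ((List.drop_sublist _ _).trans (List.take_sublist _ _) |>.subset hx)).1
  have hs_le : s.sum ≤ s.length • K := s.sum_le_card_nsmul K fun x hx =>
    (hl x ((List.drop_sublist _ _).trans (List.take_sublist _ _) |>.subset hx)).2
  refine ⟨s, (l'.take (l'.prefixLenLE (l.take i').sum)).drop (l'.prefixLenLE (l.take i).sum),
    (List.drop_sublist _ _).trans (List.take_sublist _ _),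
    (List.drop_sublist _ _).trans (List.take_sublist _ _), by omega, ?_, ?_⟩
  · rw [smul_eq_mul] at hs_pos; omega
  · rw [smul_eq_mul] at hs_le
    exact hs_le.trans (Nat.mul_le_mul_right K (by omega))

namespace Multiset

variable {K : ℕ} {P Q : Multiset ℕ}

theorem exists_le_sum_eq_le_sq (hP : ∀ x ∈ P, 1 ≤ x ∧ x ≤ K) (hQ : ∀ x ∈ Q, x ≤ K)
    (hPK : K * K < P.sum) (hsum : P.sum ≤ Q.sum) :
    ∃ P₁ ≤ P, ∃ Q₁ ≤ Q, P₁.sum = Q₁.sum ∧ 0 < P₁.sum ∧ P₁.sum ≤ K * K := by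
  have hlen : K < P.toList.length := by
    have := P.sum_le_card_nsmul K fun x hx => (hP x hx).2
    rw [smul_eq_mul] at this
    rw [length_toList]
    by_contra h
    exact absurd (this.trans (Nat.mul_le_mul_right K (not_lt.mp h))) (not_le.mpr hPK)
  obtain ⟨s, s', hs, hs', hss', hpos, hle⟩ := exists_sublists_sum_eq_le_sq
    (fun x hx => hP x (mem_toList.mp hx)) (fun x hx => hQ x (mem_toList.mp hx)) hlen
    (by rwa [← sum_toList, ← sum_toList] at hsum)
  refine ⟨s, ?_, s', ?_, by simpa using hss', by simpa using hpos, by simpa using hle⟩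
  · rw [← P.coe_toList]; exact coe_le.mpr hs.subperm
  · rw [← Q.coe_toList]; exact coe_le.mpr hs'.subperm

theorem exists_le_sum_eq_mem_Icc (hP : ∀ x ∈ P, 1 ≤ x ∧ x ≤ K) (hQ : ∀ x ∈ Q, x ≤ K)
    (hsum : P.sum ≤ Q.sum) :
    ∀ s, s + K * K < P.sum →
      ∃ P₁ ≤ P, ∃ Q₁ ≤ Q, P₁.sum = Q₁.sum ∧ P₁.sum ∈ Set.Icc s (s + K * K)
  | 0, _ => ⟨0, zero_le _, 0, zero_le _, rfl, by simp⟩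
  | s + 1, hs => by
    obtain ⟨P₁, hP₁, Q₁, hQ₁, heq, hlo, hhi⟩ := exists_le_sum_eq_mem_Icc hP hQ hsum s (by omega)
    rcases hlo.lt_or_eq with hlt | rfl
    · exact ⟨P₁, hP₁, Q₁, hQ₁, heq, hlt, by omega⟩
    have hPsum := congrArg sum (add_tsub_cancel_of_le hP₁)
    have hQsum := congrArg sum (add_tsub_cancel_of_le hQ₁)
    rw [sum_add] at hPsum hQsum
    obtain ⟨P₂, hP₂, Q₂, hQ₂, heq₂, hpos, hle⟩ := exists_le_sum_eq_le_sq (P := P - P₁)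
      (Q := Q - Q₁) (fun x hx => hP x (mem_of_le tsub_le_self hx))
      (fun x hx => hQ x (mem_of_le tsub_le_self hx)) (by omega) (by omega)
    refine ⟨P₁ + P₂, ?_, Q₁ + Q₂, ?_, by simp [heq, heq₂], by simp; omega⟩
    · exact (add_le_add_right hP₂ P₁).trans (add_tsub_cancel_of_le hP₁).le
    · exact (add_le_add_right hQ₂ Q₁).trans (add_tsub_cancel_of_le hQ₁).le

theorem filter_ne_zero_add_replicate (P : Multiset ℕ) :
    P.filter (· ≠ 0) + replicate (P.count 0) 0 = P := by
  conv_rhs => rw [← P.filter_add_not (· ≠ 0)]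
  simp [filter_eq']

end Multiset

theorem bipartiteRealizable_of_pos_of_sum_eq {K : ℕ} (hK : 0 < K) {P Q : Multiset ℕ}
    (hP : ∀ x ∈ P, 1 ≤ x ∧ x ≤ K) (hQ : ∀ x ∈ Q, 1 ≤ x ∧ x ≤ K) (hsum : P.sum = Q.sum)
    (hL : K * (K + 1) ≤ P.sum) :
    BipartiteRealizable (2 * (2 * (K * (K + 1)) + K * K)) (P + Q) := by
  induction hm : P.sum using Nat.strong_induction_on generalizing P Q with | _ m ih =>
  subst hm
  have hcard : ∀ R : Multiset ℕ, (∀ x ∈ R, 1 ≤ x ∧ x ≤ K) → Multiset.card R ≤ R.sum :=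
    fun R hR => by simpa using R.card_nsmul_le_sum (a := 1) fun x hx => (hR x hx).1
  rcases le_or_gt P.sum (2 * (K * (K + 1)) + K * K) with hsmall | hlarge
  · refine (bipartiteRealizable_card_add_card (fun x hx => (hP x hx).2) (fun x hx => (hQ x hx).2)
      hsum hL).mono ?_
    have := hcard P hP
    have := hcard Q hQ
    omega
  obtain ⟨P₁, hP₁, Q₁, hQ₁, heq, hlo, hhi⟩ := Multiset.exists_le_sum_eq_mem_Icc hP
    (fun x hx => (hQ x hx).2) hsum.le (K * (K + 1)) (by omega)
  have hPsum := congrArg Multiset.sum (add_tsub_cancel_of_le hP₁)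
  have hQsum := congrArg Multiset.sum (add_tsub_cancel_of_le hQ₁)
  rw [Multiset.sum_add] at hPsum hQsum
  have hKK : 0 < K * (K + 1) := by positivity
  have h₁ := ih P₁.sum (by omega) (fun x hx => hP x (Multiset.mem_of_le hP₁ hx))
    (fun x hx => hQ x (Multiset.mem_of_le hQ₁ hx)) heq hlo rfl
  have h₂ := ih (P - P₁).sum (by omega) (P := P - P₁) (Q := Q - Q₁)
    (fun x hx => hP x (Multiset.mem_of_le tsub_le_self hx))
    (fun x hx => hQ x (Multiset.mem_of_le tsub_le_self hx)) (by omega) (by omega) rfl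
  rw [← add_tsub_cancel_of_le hP₁, ← add_tsub_cancel_of_le hQ₁, add_add_add_comm]
  exact h₁.add h₂

theorem bipartiteRealizable_of_sum_eq {K : ℕ} (hK : 0 < K) {P Q : Multiset ℕ}
    (hP : ∀ x ∈ P, x ≤ K) (hQ : ∀ x ∈ Q, x ≤ K) (hsum : P.sum = Q.sum)
    (hL : K * (K + 1) ≤ P.sum) :
    BipartiteRealizable (2 * (2 * (K * (K + 1)) + K * K)) (P + Q) := by
  have hpos : ∀ R : Multiset ℕ, (∀ x ∈ R, x ≤ K) → ∀ x ∈ R.filter (· ≠ 0), 1 ≤ x ∧ x ≤ K :=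
    fun R hR x hx => by
      rw [Multiset.mem_filter] at hx
      exact ⟨Nat.one_le_iff_ne_zero.mpr hx.2, hR x hx.1⟩
  have hfsum : ∀ R : Multiset ℕ, (R.filter (· ≠ 0)).sum = R.sum := fun R => by
    conv_rhs => rw [← R.filter_ne_zero_add_replicate]
    simp
  rw [← P.filter_ne_zero_add_replicate, ← Q.filter_ne_zero_add_replicate, add_add_add_comm,
    ← Multiset.replicate_add]
  exact (bipartiteRealizable_of_pos_of_sum_eq hK (hpos P hP) (hpos Q hQ)
    (by rw [hfsum, hfsum, hsum]) (by rwa [hfsum])).add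
    (bipartiteRealizable_replicate_zero (by nlinarith) _)

/-- **Robertson's bipartite question, bounded components form.**
For every `k` there is an `N` such that every finite simple bipartite
(2-colorable) graph of maximum degree at most `k` has the same degree multiset
as some bipartite graph all of whose connected components have at most `N`
vertices. -/
theorem bipartite_bounded_degree_realized_with_bounded_components (k : ℕ) :
    ∃ N : ℕ, ∀ (V : Type) [Fintype V] (G : SimpleGraph V),
      G.Colorable 2 →
      (∀ v : V, G.degree v ≤ k) →
      ∃ (n : ℕ) (H : SimpleGraph (Fin n)),
        H.Colorable 2 ∧
        degMultiset H = degMultiset G ∧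
        ∀ c : H.ConnectedComponent, c.supp.ncard ≤ N := by
  refine ⟨2 * (2 * ((k + 1) * (k + 1 + 1)) + (k + 1) * (k + 1)), fun V _ G hG hk => ?_⟩
  apply BipartiteRealizable.exists_fin
  obtain ⟨P, Q, hPQ, hsum⟩ := hG.exists_degMultiset_eq_add
  rcases lt_or_ge P.sum ((k + 1) * (k + 1 + 1)) with hsmall | hlarge
  · refine hG.bipartiteRealizable (by nlinarith) ?_
    have : ∑ v, G.degree v = P.sum + Q.sum := by
      rw [← Multiset.sum_add, ← hPQ, degMultiset, sum_eq_multiset_sum]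
    omega
  · have hle : ∀ x ∈ P + Q, x ≤ k + 1 := by
      rw [← hPQ, degMultiset]
      simp only [Multiset.mem_map]
      rintro _ ⟨v, -, rfl⟩
      exact (hk v).trans k.le_succ
    rw [hPQ]
    exact bipartiteRealizable_of_sum_eq k.succ_pos
      (fun x hx => hle x (Multiset.mem_add.mpr (.inl hx)))
      (fun x hx => hle x (Multiset.mem_add.mpr (.inr hx))) hsum hlarge
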